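/- arXiv:2003.00454 — 3 statements merged into one kernel-verified Lean document; each statement's English description precedes it below -/
import Mathlib

section
/- Let U_n = U_n(s,t) be the n×n upper Hessenberg matrix with subdiagonal s, entry t at positions (i,j) with j ≥ i and j−i even, and 0 elsewhere above the diagonal. Let U_n^{(rc)} be the matrix obtained by swapping the first two rows and the last two columns of a suitable modification so that P_n^{(r)} · U_n^{(rc)} · P_n^{(c)} equals U_n except its (1,1) entry is s instead of t, its (2,1) entry is t instead of s, its (n−1,n) entry is 0 with (n−1,n−1) entry t, and its (n,n−1) entry is t with (n,n) entry s. Then for n ≥ 4, det(U_n^{(rc)}) = s²·det(U_{n−2}) + 2ts²·det(U_{n−3}) + t²s²·det(U_{n−4}), where det(U_0) := 0. -/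
/-- The upper Hessenberg matrix `U_n(s,t)`. -/
def hessU (s t : ℝ) (n : ℕ) : Matrix (Fin n) (Fin n) ℝ :=
  fun i j =>
    if (i : ℕ) ≤ (j : ℕ) then (if ((j : ℕ) - (i : ℕ)) % 2 = 0 then t else 0)
    else if (i : ℕ) = (j : ℕ) + 1 then s else 0

/-- `det(U_n)` with the convention `det(U_0) := 0`. -/
noncomputable def detU (s t : ℝ) (n : ℕ) : ℝ :=
  if n = 0 then 0 else (hessU s t n).det

/-- Permutation matrix swapping the first two rows of the identity. -/
def permR (n : ℕ) : Matrix (Fin n) (Fin n) ℝ :=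
  fun i j =>
    if ((i : ℕ) = 0 ∧ (j : ℕ) = 1) ∨ ((i : ℕ) = 1 ∧ (j : ℕ) = 0) then 1
    else if (i : ℕ) = (j : ℕ) ∧ 2 ≤ (i : ℕ) then 1 else 0

/-- Permutation matrix swapping the last two columns of the identity. -/
def permC (n : ℕ) : Matrix (Fin n) (Fin n) ℝ :=
  fun i j =>
    if ((i : ℕ) = n - 2 ∧ (j : ℕ) = n - 1) ∨ ((i : ℕ) = n - 1 ∧ (j : ℕ) = n - 2) then 1
    else if (i : ℕ) = (j : ℕ) ∧ (i : ℕ) < n - 2 then 1 else 0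

/-- The matrix `B` equal to `U_n` except that its `(1,1)` entry is `s`, its
`(2,1)` entry is `t`, its `(n,n-1)` entry is `t` and its `(n,n)` entry is `s`
(1-indexed); its `(n-1,n)` entry is `0` and `(n-1,n-1)` entry is `t` as in `U_n`. -/
def matB (s t : ℝ) (n : ℕ) : Matrix (Fin n) (Fin n) ℝ :=
  fun i j =>
    if (i : ℕ) = 0 ∧ (j : ℕ) = 0 then s
    else if (i : ℕ) = 1 ∧ (j : ℕ) = 0 then t
    else if (i : ℕ) = n - 1 ∧ (j : ℕ) = n - 2 then t
    else if (i : ℕ) = n - 1 ∧ (j : ℕ) = n - 1 then s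
    else hessU s t n i j

/-- `U_n^{(rc)} = P_n^{(r)} ⬝ B ⬝ P_n^{(c)}`. -/
noncomputable def hessUrc (s t : ℝ) (n : ℕ) : Matrix (Fin n) (Fin n) ℝ :=
  permR n * matB s t n * permC n

/-!
Each matrix below has its first column supported on the first two rows, so expanding along that
column expresses its determinant through the minors at `(0,0)` and `(1,0)`, which again belong to
a few related families. The `(1,0)` minor of `U_k` is `U_{k-1}` with first row `(0,t,0,t,…)`,
whose determinant is `-s det U_{k-2}`; hence `U_k` with first column `(a,b,0,…)` has determinant
`a det U_{k-1} + b s det U_{k-2}`. As `U_k` is persymmetric, this also computes the determinant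
of the matrix `C_k` obtained from `U_k` by swapping the entries `s, t` at the end of its last row.
Expanding `B` along its first column `(s,t)` yields `s det C_{n-1} + t s det C_{n-2}`, and the two
permutation matrices contribute `(-1)^2`.
-/

open Matrix

theorem det_succ_column_zero_of_hessenberg {R : Type*} [CommRing R] {m : ℕ}
    (M : Matrix (Fin (m + 2)) (Fin (m + 2)) R)
    (h : ∀ i : Fin (m + 2), 2 ≤ (i : ℕ) → M i 0 = 0) :
    M.det = M 0 0 * (M.submatrix Fin.succ Fin.succ).det
      - M 1 0 * (M.submatrix (Fin.succAbove 1) Fin.succ).det := by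
  rw [det_succ_column_zero, Fintype.sum_eq_add 0 1 zero_ne_one]
  · simp [sub_eq_add_neg]
  · rintro i ⟨hi0, hi1⟩
    rw [h i (by simp only [ne_eq, Fin.ext_iff, Fin.val_zero, Fin.val_one] at hi0 hi1; omega),
      mul_zero, zero_mul]

theorem Fin.val_one_succAbove {m : ℕ} (j : Fin (m + 1)) :
    ((1 : Fin (m + 2)).succAbove j : ℕ) = if (j : ℕ) = 0 then 0 else (j : ℕ) + 1 := by
  cases j using Fin.cases <;> simp

section

variable (s t : ℝ)

def hessUOddRow (k : ℕ) : Matrix (Fin k) (Fin k) ℝ :=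
  fun i j => if (i : ℕ) = 0 then (if (j : ℕ) % 2 = 1 then t else 0) else hessU s t k i j

/-- The matrix `C_k`; `matB` is `C_n` with first column `(s, t, 0, …)` in place of
`(t, s, 0, …)`. -/
def hessUSwapCorner (k : ℕ) : Matrix (Fin k) (Fin k) ℝ :=
  fun i j =>
    if (i : ℕ) = k - 1 ∧ (j : ℕ) = k - 2 then t
    else if (i : ℕ) = k - 1 ∧ (j : ℕ) = k - 1 then s
    else hessU s t k i j

def hessUOddRowSwapCorner (k : ℕ) : Matrix (Fin k) (Fin k) ℝ :=
  fun i j =>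
    if (i : ℕ) = k - 1 ∧ (j : ℕ) = k - 2 then t
    else if (i : ℕ) = k - 1 ∧ (j : ℕ) = k - 1 then s
    else hessUOddRow s t k i j

def hessUFirstCol (a b : ℝ) (k : ℕ) : Matrix (Fin k) (Fin k) ℝ :=
  fun i j =>
    if (j : ℕ) = 0 then (if (i : ℕ) = 0 then a else if (i : ℕ) = 1 then b else 0)
    else hessU s t k i j

theorem detU_succ (m : ℕ) : detU s t (m + 1) = (hessU s t (m + 1)).det :=
  if_neg m.succ_ne_zero

theorem hessU_submatrix_succ_succ (m : ℕ) :
    (hessU s t (m + 2)).submatrix Fin.succ Fin.succ = hessU s t (m + 1) := by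
  ext i j
  simp only [submatrix_apply, hessU, Fin.val_succ]
  grind

theorem hessU_submatrix_one_succ (m : ℕ) :
    (hessU s t (m + 2)).submatrix (Fin.succAbove 1) Fin.succ = hessUOddRow s t (m + 1) := by
  ext i j
  simp only [submatrix_apply, hessU, hessUOddRow, Fin.val_one_succAbove, Fin.val_succ]
  grind

theorem hessUOddRow_submatrix_one_succ (m : ℕ) :
    (hessUOddRow s t (m + 2)).submatrix (Fin.succAbove 1) Fin.succ = hessU s t (m + 1) := by
  ext i j
  simp only [submatrix_apply, hessU, hessUOddRow, Fin.val_one_succAbove, Fin.val_succ]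
  grind

theorem hessUFirstCol_submatrix_succ (a b : ℝ) {m : ℕ} (σ : Fin m → Fin (m + 1)) :
    (hessUFirstCol s t a b (m + 1)).submatrix σ Fin.succ =
      (hessU s t (m + 1)).submatrix σ Fin.succ := by
  ext i j
  simp [hessUFirstCol]

theorem hessUOddRowSwapCorner_submatrix_one_succ (m : ℕ) :
    (hessUOddRowSwapCorner s t (m + 3)).submatrix (Fin.succAbove 1) Fin.succ =
      hessUSwapCorner s t (m + 2) := by
  ext i j
  simp only [submatrix_apply, hessU, hessUOddRow, hessUSwapCorner, hessUOddRowSwapCorner,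
    Fin.val_one_succAbove, Fin.val_succ]
  grind

theorem matB_submatrix_succ_succ (m : ℕ) :
    (matB s t (m + 4)).submatrix Fin.succ Fin.succ = hessUSwapCorner s t (m + 3) := by
  ext i j
  simp only [submatrix_apply, hessU, matB, hessUSwapCorner, Fin.val_succ]
  grind

theorem matB_submatrix_one_succ (m : ℕ) :
    (matB s t (m + 4)).submatrix (Fin.succAbove 1) Fin.succ =
      hessUOddRowSwapCorner s t (m + 3) := by
  ext i j
  simp only [submatrix_apply, hessU, matB, hessUOddRow, hessUOddRowSwapCorner,
    Fin.val_one_succAbove, Fin.val_succ]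
  grind

/-- `U_k` is persymmetric, so reflecting in the antidiagonal carries the swapped corner of the last
row to the first column. -/
theorem hessUSwapCorner_submatrix_rev_transpose (m : ℕ) :
    ((hessUSwapCorner s t (m + 2)).submatrix Fin.rev Fin.rev)ᵀ =
      hessUFirstCol s t s t (m + 2) := by
  ext i j
  simp only [transpose_apply, submatrix_apply, hessU, hessUSwapCorner, hessUFirstCol,
    Fin.val_rev]
  grind

theorem det_hessUOddRow (m : ℕ) : (hessUOddRow s t (m + 1)).det = -(s * detU s t m) := by
  cases m with
  | zero => simp [hessUOddRow, detU]
  | succ m =>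
    rw [det_succ_column_zero_of_hessenberg _
        (fun i hi => by simp only [hessUOddRow, hessU, Fin.val_zero]; grind),
      hessUOddRow_submatrix_one_succ, detU_succ]
    simp [hessUOddRow, hessU]

theorem det_hessUFirstCol (a b : ℝ) (m : ℕ) :
    (hessUFirstCol s t a b (m + 2)).det = a * detU s t (m + 1) + b * s * detU s t m := by
  rw [det_succ_column_zero_of_hessenberg _
      (fun i hi => by simp only [hessUFirstCol, Fin.val_zero]; grind),
    hessUFirstCol_submatrix_succ, hessUFirstCol_submatrix_succ, hessU_submatrix_succ_succ,
    hessU_submatrix_one_succ, det_hessUOddRow, detU_succ]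
  have hcol : hessUFirstCol s t a b (m + 2) 0 0 = a ∧ hessUFirstCol s t a b (m + 2) 1 0 = b := by
    simp [hessUFirstCol]
  rw [hcol.1, hcol.2]
  ring

theorem det_hessUSwapCorner (m : ℕ) :
    (hessUSwapCorner s t (m + 2)).det = s * detU s t (m + 1) + t * s * detU s t m := by
  rw [← det_hessUFirstCol, ← hessUSwapCorner_submatrix_rev_transpose, det_transpose]
  exact (det_submatrix_equiv_self Fin.revPerm _).symm

theorem det_hessUOddRowSwapCorner (m : ℕ) :
    (hessUOddRowSwapCorner s t (m + 3)).det = -(s * (hessUSwapCorner s t (m + 2)).det) := by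
  rw [det_succ_column_zero_of_hessenberg _ (fun i hi => by
      simp only [hessUOddRowSwapCorner, hessUOddRow, hessU, Fin.val_zero]; grind),
    hessUOddRowSwapCorner_submatrix_one_succ]
  simp [hessUOddRowSwapCorner, hessUOddRow, hessU]

theorem det_matB (m : ℕ) :
    (matB s t (m + 4)).det =
      s ^ 2 * detU s t (m + 2) + 2 * t * s ^ 2 * detU s t (m + 1) + t ^ 2 * s ^ 2 * detU s t m := by
  rw [det_succ_column_zero_of_hessenberg _
      (fun i hi => by simp only [matB, hessU, Fin.val_zero]; grind),
    matB_submatrix_succ_succ, matB_submatrix_one_succ, det_hessUOddRowSwapCorner,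
    det_hessUSwapCorner, det_hessUSwapCorner]
  have hcol : matB s t (m + 4) 0 0 = s ∧ matB s t (m + 4) 1 0 = t := by simp [matB]
  rw [hcol.1, hcol.2]
  ring

end

theorem permR_eq_permMatrix_swap (m : ℕ) : permR (m + 2) = (Equiv.swap 0 1).permMatrix ℝ := by
  ext i j
  simp only [permR, Equiv.Perm.permMatrix, PEquiv.toMatrix_apply, Equiv.toPEquiv_apply,
    Option.mem_def, Option.some_inj, Equiv.swap_apply_def, Fin.ext_iff, apply_ite Fin.val,
    Fin.val_zero, Fin.val_one]
  grind

theorem permC_eq_permMatrix_swap (m : ℕ) :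
    permC (m + 2) = (Equiv.swap (Fin.last m).castSucc (Fin.last (m + 1))).permMatrix ℝ := by
  ext i j
  simp only [permC, Equiv.Perm.permMatrix, PEquiv.toMatrix_apply, Equiv.toPEquiv_apply,
    Option.mem_def, Option.some_inj, Equiv.swap_apply_def, Fin.ext_iff, Fin.val_last,
    Fin.val_castSucc]
  grind

theorem det_permR (m : ℕ) : (permR (m + 2)).det = -1 := by
  rw [permR_eq_permMatrix_swap, det_permutation, Equiv.Perm.sign_swap zero_ne_one]
  simp

theorem det_permC (m : ℕ) : (permC (m + 2)).det = -1 := by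
  rw [permC_eq_permMatrix_swap, det_permutation,
    Equiv.Perm.sign_swap (Fin.castSucc_lt_last _).ne]
  simp

theorem det_hessUrc (s t : ℝ) :
    ∀ n : ℕ, 4 ≤ n →
      (hessUrc s t n).det =
        s ^ 2 * detU s t (n - 2) + 2 * t * s ^ 2 * detU s t (n - 3) +
          t ^ 2 * s ^ 2 * detU s t (n - 4) := by
  intro n hn
  obtain ⟨m, rfl⟩ : ∃ m, n = m + 4 := ⟨n - 4, by omega⟩
  rw [hessUrc, det_mul, det_mul, det_permR, det_permC, det_matB]
  simp only [Nat.add_sub_cancel, show m + 4 - 2 = m + 2 by omega, show m + 4 - 3 = m + 1 by omega]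
  ring
end

section
/- For n ≥ 2 and real x > (4/5)·n², one has x^{n−2} + ⌊n/2⌋·⌊(n−1)/2⌋·x^{n−3} > C(n−1,2)·x^{n−3} + C(n−1,4)·x^{n−5} + C(n−1,6)·x^{n−7} + ⋯ (sum over even k ≥ 2 with n−1−k ≥ 0 of C(n−1,k)·x^{n−1−k}). -/
/-!
With `m = n - 1`, consecutive even binomial coefficients satisfy `C(m, k+2) ≤ C(m, k) · m² / 12`
for `k ≥ 2`, so the `j`-th term of the sum is at most `C(m, 2) · x^(m-2) · r^(j-1)` with
`r = m² / (12 x²)`. The hypothesis `x > 4n²/5` gives `r ≤ 5/48`, hence the sum is at most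
`(48/43) · C(n-1, 2) · x^(n-3)`; this is beaten by `x^(n-2) + ⌊n/2⌋⌊(n-1)/2⌋ · x^(n-3)` because
`4 ⌊n/2⌋⌊(n-1)/2⌋ ≥ (n-1)(n-2) = 2 C(n-1, 2)`.
-/

open Finset

theorem Nat.choose_add_two_mul_le (m k : ℕ) :
    m.choose (k + 2) * ((k + 2) * (k + 1)) ≤ m.choose k * m ^ 2 := by
  have h₁ := Nat.choose_succ_right_eq m (k + 1)
  have h₀ := Nat.choose_succ_right_eq m k
  calc m.choose (k + 2) * ((k + 2) * (k + 1))
      = m.choose (k + 1 + 1) * (k + 1 + 1) * (k + 1) := by ring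
    _ = m.choose (k + 1) * (k + 1) * (m - (k + 1)) := by rw [h₁]; ring
    _ = m.choose k * ((m - k) * (m - (k + 1))) := by rw [h₀]; ring
    _ ≤ m.choose k * m ^ 2 := by
      rw [sq]; gcongr <;> omega

theorem Nat.cast_choose_two_mul_add_two_le (m j : ℕ) :
    (m.choose (2 * j + 2) : ℝ) ≤ m.choose 2 * ((m : ℝ) ^ 2 / 12) ^ j := by
  induction j with
  | zero => simp
  | succ j ih =>
    have hstep : (m.choose (2 * j + 4) : ℝ) * 12 ≤ m.choose (2 * j + 2) * (m : ℝ) ^ 2 := by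
      have h := Nat.choose_add_two_mul_le m (2 * j + 2)
      have h12 : 12 ≤ (2 * j + 2 + 2) * (2 * j + 2 + 1) := by nlinarith
      exact_mod_cast (Nat.mul_le_mul_left _ h12).trans h
    rw [pow_succ, ← mul_assoc, show 2 * (j + 1) + 2 = 2 * j + 4 by ring]
    calc (m.choose (2 * j + 4) : ℝ) ≤ m.choose (2 * j + 2) * ((m : ℝ) ^ 2 / 12) := by linarith
      _ ≤ _ := by gcongr

theorem sum_choose_two_mul_mul_pow_le (m : ℕ) {x r : ℝ} (hx : 0 ≤ x) (hr₀ : 0 ≤ r) (hr₁ : r < 1)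
    (hm : (m : ℝ) ^ 2 ≤ 12 * r * x ^ 2) :
    ∑ j ∈ Icc 1 (m / 2), (m.choose (2 * j) : ℝ) * x ^ (m - 2 * j) ≤
      m.choose 2 * x ^ (m - 2) / (1 - r) := by
  have hterm : ∀ i ∈ range (m / 2),
      (m.choose (2 * (1 + i)) : ℝ) * x ^ (m - 2 * (1 + i)) ≤ m.choose 2 * x ^ (m - 2) * r ^ i := by
    intro i hi
    have hi : 2 * i + 2 ≤ m := by rw [mem_range] at hi; omega
    have hratio : (m : ℝ) ^ 2 / 12 ≤ r * x ^ 2 := by linarith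
    calc (m.choose (2 * (1 + i)) : ℝ) * x ^ (m - 2 * (1 + i))
        ≤ m.choose 2 * (r * x ^ 2) ^ i * x ^ (m - (2 * i + 2)) := by
          rw [show 2 * (1 + i) = 2 * i + 2 by ring]
          gcongr
          exact (Nat.cast_choose_two_mul_add_two_le m i).trans (by gcongr)
      _ = m.choose 2 * x ^ (m - 2) * r ^ i := by
          rw [show m - 2 = m - (2 * i + 2) + 2 * i by omega, pow_add, pow_mul, mul_pow]; ring
  calc ∑ j ∈ Icc 1 (m / 2), (m.choose (2 * j) : ℝ) * x ^ (m - 2 * j)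
      = ∑ i ∈ range (m / 2), (m.choose (2 * (1 + i)) : ℝ) * x ^ (m - 2 * (1 + i)) := by
        rw [← Ico_add_one_right_eq_Icc, sum_Ico_eq_sum_range, Nat.add_sub_cancel]
    _ ≤ ∑ i ∈ range (m / 2), m.choose 2 * x ^ (m - 2) * r ^ i := sum_le_sum hterm
    _ ≤ m.choose 2 * x ^ (m - 2) / (1 - r) := by
        rw [← mul_sum, range_eq_Ico, div_eq_mul_one_div]
        gcongr
        simpa using geom_sum_Ico_le_of_lt_one hr₀ hr₁ (m := 0) (n := m / 2)

theorem sub_one_mul_sub_two_le_four_mul_div_two_mul {n : ℕ} (hn : 2 ≤ n) :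
    ((n : ℝ) - 1) * ((n : ℝ) - 2) ≤ 4 * (((n / 2 : ℕ) : ℝ) * (((n - 1) / 2 : ℕ) : ℝ)) := by
  have h : (n - 1) * (n - 2) ≤ (2 * (n / 2)) * (2 * ((n - 1) / 2)) := by
    gcongr <;> omega
  have h' : (((n - 1) * (n - 2) : ℕ) : ℝ) ≤ (((2 * (n / 2)) * (2 * ((n - 1) / 2)) : ℕ) : ℝ) := by
    exact_mod_cast h
  rw [Nat.cast_mul, Nat.cast_sub (by omega), Nat.cast_sub (by omega)] at h'
  push_cast at h'
  linarith

theorem ineq_three (n : ℕ) (hn : 2 ≤ n) (x : ℝ) (hx : x > 4 / 5 * (n : ℝ) ^ 2) :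
    x ^ (n - 2) + ((n / 2 : ℕ) : ℝ) * (((n - 1) / 2 : ℕ) : ℝ) * x ^ (n - 3) >
      ∑ j ∈ Finset.Icc 1 ((n - 1) / 2),
        ((n - 1).choose (2 * j) : ℝ) * x ^ (n - 1 - 2 * j) := by
  obtain rfl | hn := hn.eq_or_lt
  · simp
  set F : ℝ := ((n / 2 : ℕ) : ℝ) * (((n - 1) / 2 : ℕ) : ℝ)
  have hn₂ : (2 : ℝ) ≤ n := by exact_mod_cast hn.le
  have hx₁ : 1 ≤ x := by nlinarith
  have hm : ((n - 1 : ℕ) : ℝ) ^ 2 ≤ 12 * (5 / 48) * x ^ 2 := by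
    have : ((n - 1 : ℕ) : ℝ) ≤ n := by exact_mod_cast Nat.sub_le n 1
    nlinarith
  have hsum := sum_choose_two_mul_mul_pow_le (n - 1) (by positivity) (by norm_num) (by norm_num) hm
  have hchoose : ((n - 1).choose 2 : ℝ) = ((n : ℝ) - 1) * ((n : ℝ) - 2) / 2 := by
    rw [Nat.cast_choose_two, Nat.cast_sub (by omega)]; push_cast; ring
  have hF := sub_one_mul_sub_two_le_four_mul_div_two_mul hn.le
  have hkey : ((n - 1).choose 2 : ℝ) / (1 - 5 / 48) < x + F := by
    have h₀ : 0 ≤ ((n : ℝ) - 1) * ((n : ℝ) - 2) := by nlinarith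
    have h₁ : ((n : ℝ) - 1) * ((n : ℝ) - 2) ≤ (n : ℝ) ^ 2 := by nlinarith
    rw [hchoose]; norm_num; linarith
  rw [show n - 1 - 2 = n - 3 by omega] at hsum
  rw [show x ^ (n - 2) = x * x ^ (n - 3) by rw [← pow_succ']; congr 1; omega]
  calc ∑ j ∈ Finset.Icc 1 ((n - 1) / 2), ((n - 1).choose (2 * j) : ℝ) * x ^ (n - 1 - 2 * j)
      ≤ ((n - 1).choose 2 : ℝ) / (1 - 5 / 48) * x ^ (n - 3) := by rwa [div_mul_eq_mul_div]
    _ < (x + F) * x ^ (n - 3) := by gcongr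
    _ = _ := by ring
end

section
/- For s, t real with s > (4/5)·n²·t > 0 and n ≥ 2, the maximum absolute determinant over n×n upper Hessenberg matrices with subdiagonal entries s and upper-triangular entries in [0,t] equals s^{n−1}·t + ⌊n/2⌋·⌊(n−1)/2⌋·s^{n−3}·t³. -/
/-!
Put `τ = t / s`, `g 0 = 1` and `g (m + 1) = -∑_{k ≤ m} (a k m / s) g k`, all weights lying in
`[0, τ]`. The row vector `(g 0, …, g (n - 1))` kills the first `n - 1` columns of `A`, which gives
`det A = (-s) ^ n g n`. By the recursion, a positive `g k` is at most `τ` times the earlier negative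
parts, and a negative one at most `τ (1 + earlier positive parts)`. Positive and negative indices
in `[1, n)` form at most `c = ⌊n/2⌋⌊(n-1)/2⌋` pairs, so for `τ < 5 / (4 n²)` the positive parts add
up to at most `c τ²`, and `|g n| ≤ τ + c τ³`. Equality holds when `g k = -τ` for
`1 ≤ k ≤ ⌊(n-1)/2⌋` and `g k = ⌊(n-1)/2⌋ τ²` for the larger `k < n`, and the last column collects
all of them with the same sign.
-/

/-- `A` is an `n×n` upper Hessenberg matrix with subdiagonal entries `s`
and upper-triangular entries in `[0,t]`. -/
def IsUpperHessenbergIcc (s t : ℝ) {n : ℕ} (A : Matrix (Fin n) (Fin n) ℝ) : Prop :=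
  (∀ i j : Fin n, (i : ℕ) = (j : ℕ) + 1 → A i j = s) ∧
  (∀ i j : Fin n, (j : ℕ) + 1 < (i : ℕ) → A i j = 0) ∧
  (∀ i j : Fin n, (i : ℕ) ≤ (j : ℕ) → A i j ∈ Set.Icc (0 : ℝ) t)

open Matrix Finset

theorem Matrix.det_updateRow_vecMul {R ι : Type*} [CommRing R] [Fintype ι] [DecidableEq ι]
    (A : Matrix ι ι R) (i : ι) (x : ι → R) :
    (A.updateRow i (x ᵥ* A)).det = x i * A.det := by
  rw [vecMul_eq_sum, det_updateRow_sum, smul_eq_mul]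

/- Replacing row `0` by `x ᵥ* A` multiplies the determinant by `x 0 = 1`, and the new row vanishes
outside the last column, whose minor is upper triangular. -/
theorem Matrix.det_hessenberg_eq_vecMul_last {R : Type*} [CommRing R] {n : ℕ}
    (A : Matrix (Fin (n + 1)) (Fin (n + 1)) R)
    (hA : ∀ i j : Fin (n + 1), (j : ℕ) + 1 < i → A i j = 0)
    (x : Fin (n + 1) → R) (hx0 : x 0 = 1) (hx : ∀ j : Fin n, (x ᵥ* A) j.castSucc = 0) :
    A.det = (-1) ^ n * (∏ i : Fin n, A i.succ i.castSucc) * (x ᵥ* A) (Fin.last n) := by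
  have hsub : (A.updateRow 0 (x ᵥ* A)).submatrix Fin.succ Fin.castSucc
      = A.submatrix Fin.succ Fin.castSucc := by
    ext i j
    simp
  have htri : (A.submatrix Fin.succ Fin.castSucc).IsUpperTriangular := fun i j hij => by
    simp only [id, Fin.lt_def] at hij
    exact hA _ _ (by simp; omega)
  have hdet := det_updateRow_vecMul A 0 x
  rw [hx0, one_mul, det_succ_row_zero, Fin.sum_univ_castSucc] at hdet
  simp only [Fin.val_castSucc, updateRow_self, hx, mul_zero, zero_mul, sum_const_zero,
    Fin.val_last, Fin.succAbove_last, hsub, det_of_isUpperTriangular htri, submatrix_apply,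
    zero_add] at hdet
  rw [← hdet]
  ring

section HessenbergSeq

variable {R : Type*} [CommRing R]

/- For `b = a / s`, with `a` upper Hessenberg with subdiagonal `s`, this is the leading principal
minor of order `m` divided by `(-s) ^ m`. -/
def hessenbergSeq (b : ℕ → ℕ → R) : ℕ → R
  | 0 => 1
  | m + 1 => -∑ k : Fin (m + 1), b k m * hessenbergSeq b k

@[simp] theorem hessenbergSeq_zero (b : ℕ → ℕ → R) : hessenbergSeq b 0 = 1 := by
  rw [hessenbergSeq]

theorem hessenbergSeq_succ (b : ℕ → ℕ → R) (m : ℕ) :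
    hessenbergSeq b (m + 1) = -∑ k ∈ range (m + 1), b k m * hessenbergSeq b k := by
  rw [hessenbergSeq, Fin.sum_univ_eq_sum_range (fun k => b k m * hessenbergSeq b k)]

end HessenbergSeq

theorem Matrix.det_hessenberg_eq_hessenbergSeq {K : Type*} [Field K] {n : ℕ} {s : K} (hs : s ≠ 0)
    (a : ℕ → ℕ → K) (hsub : ∀ j < n, a (j + 1) j = s)
    (hzero : ∀ i ≤ n, ∀ j, j + 1 < i → a i j = 0) :
    (of fun i j : Fin (n + 1) => a i j).det
      = (-s) ^ (n + 1) * hessenbergSeq (fun k m => a k m / s) (n + 1) := by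
  set A : Matrix (Fin (n + 1)) (Fin (n + 1)) K := of fun i j => a i j
  set g := hessenbergSeq (fun k m => a k m / s)
  have hcol (m : ℕ) : ∑ k ∈ range (m + 1), g k * a k m = -s * g (m + 1) := by
    rw [show g (m + 1) = _ from hessenbergSeq_succ _ m, mul_neg, neg_mul, neg_neg, mul_sum]
    refine sum_congr rfl fun k _ => ?_
    field_simp
    exact mul_comm _ _
  have hvecMul (j : Fin (n + 1)) :
      ((fun i : Fin (n + 1) => g i) ᵥ* A) j = ∑ k ∈ range (n + 1), g k * a k j := by
    simp [A, vecMul, dotProduct, Fin.sum_univ_eq_sum_range (fun k => g k * a k j)]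
  rw [det_hessenberg_eq_vecMul_last A (fun i j h => hzero i (by omega) j h) (fun i => g i)
    (by simp [g]) fun j => ?_, hvecMul, Fin.val_last, hcol n]
  · have hprod : ∏ i : Fin n, A i.succ i.castSucc = s ^ n := by simp [A, hsub]
    rw [hprod, neg_pow]
    ring
  · rw [hvecMul, Fin.val_castSucc, ← sum_range_add_sum_Ico _ (by omega : j + 2 ≤ n + 1),
      sum_range_succ, hcol j, hsub j j.isLt,
      sum_eq_zero fun k hk => by
        rw [hzero k (by simp at hk; omega) j (by simp at hk; omega), mul_zero]]
    ring

theorem Nat.mul_le_of_add_le {a b m : ℕ} (h : a + b ≤ m) : a * b ≤ (m + 1) / 2 * (m / 2) := by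
  obtain ⟨k, rfl | rfl⟩ := Nat.even_or_odd' m
  · rw [show (2 * k + 1) / 2 = k by omega, show 2 * k / 2 = k by omega]
    zify at h ⊢
    nlinarith [sq_nonneg ((a : ℤ) - b)]
  · rw [show (2 * k + 1 + 1) / 2 = k + 1 by omega, show (2 * k + 1) / 2 = k by omega]
    zify at h ⊢
    rcases le_or_gt (a : ℤ) k with hak | hak <;> nlinarith

theorem Finset.card_mul_card_le_of_disjoint {N : ℕ} {P Q : Finset ℕ} (hP : P ⊆ Ico 1 N)
    (hQ : Q ⊆ Ico 1 N) (hPQ : Disjoint P Q) : #P * #Q ≤ N / 2 * ((N - 1) / 2) := by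
  have hcard : #P + #Q ≤ N - 1 := by
    rw [← card_union_of_disjoint hPQ, ← Nat.card_Ico 1 N]
    exact card_le_card (union_subset hP hQ)
  rcases N with _ | N
  · simp_all
  · simpa using Nat.mul_le_of_add_le hcard

theorem le_mul_of_le_mul_sub_one_mul_one_add {S a x : ℝ} (hS : 0 ≤ S) (ha : 0 ≤ a) (hx : 1 ≤ x)
    (hax : a * x ^ 2 ≤ 1) (h : S ≤ a * (x - 1) * (1 + S)) : S ≤ a * x := by
  nlinarith

noncomputable def posSupport (u : ℕ → ℝ) (N : ℕ) : Finset ℕ := (Ico 1 N).filter (0 < u ·)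

section Alternating

variable {N : ℕ} {τ : ℝ} {u v : ℕ → ℝ}

theorem posSupport_mono {k : ℕ} (hk : k ≤ N) : posSupport u k ⊆ posSupport u N :=
  filter_subset_filter _ (Ico_subset_Ico_right hk)

theorem sum_posSupport (hu : ∀ k, 0 ≤ u k) : ∑ k ∈ posSupport u N, u k = ∑ k ∈ Ico 1 N, u k :=
  sum_filter_of_ne fun k _ hk => (hu k).lt_of_ne' hk

theorem card_mul_card_posSupport_le (huv : ∀ k, min (u k) (v k) = 0) :
    #(posSupport u N) * #(posSupport v N) ≤ N / 2 * ((N - 1) / 2) :=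
  card_mul_card_le_of_disjoint (filter_subset _ _) (filter_subset _ _) <|
    disjoint_filter.2 fun k _ hk hk' => (lt_min hk hk').ne' (huv k)

theorem sum_card_posSupport_le :
    ∑ k ∈ posSupport u N, #(posSupport v k) ≤ #(posSupport u N) * #(posSupport v N) := by
  rw [← smul_eq_mul, ← sum_const]
  exact sum_le_sum fun k hk => card_le_card (posSupport_mono (mem_Ico.1 (mem_filter.1 hk).1).2.le)

theorem sum_card_posSupport_lt {i j k : ℕ} (hi : i ∈ Ico 1 j) (hui : 0 < u i)
    (hk : k ∈ posSupport u N) (hj : j ∈ posSupport v k) :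
    ∑ k ∈ posSupport u N, #(posSupport v k) < #(posSupport u N) * #(posSupport v N) := by
  have hkN := (mem_Ico.1 (mem_filter.1 hk).1).2
  have hjk := (mem_Ico.1 (mem_filter.1 hj).1).2
  have hij := mem_Ico.1 hi
  have hiP : i ∈ posSupport u N :=
    mem_filter.2 ⟨Ico_subset_Ico_right (show j ≤ N by omega) hi, hui⟩
  rw [← smul_eq_mul, ← sum_const]
  refine sum_lt_sum
    (fun k hk => card_le_card (posSupport_mono (mem_Ico.1 (mem_filter.1 hk).1).2.le))
    ⟨i, hiP, card_lt_card ?_⟩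
  refine (ssubset_iff_of_subset (posSupport_mono (by omega))).2 ⟨j, posSupport_mono hkN.le hj, ?_⟩
  simp only [posSupport, mem_filter, mem_Ico] at hi ⊢
  omega

theorem sum_Ico_le_mul_sum_card (hτ : 0 ≤ τ) (hu : ∀ k, 0 ≤ u k) (hv : ∀ k, 0 ≤ v k)
    (hub : ∀ k ∈ Ico 1 N, u k ≤ τ * ∑ j ∈ Ico 1 k, v j) (w : ℝ)
    (hw : ∀ k ∈ posSupport u N, ∀ j ∈ posSupport v k, v j ≤ τ * w) :
    ∑ k ∈ Ico 1 N, u k ≤ τ ^ 2 * w * ∑ k ∈ posSupport u N, #(posSupport v k) := by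
  calc ∑ k ∈ Ico 1 N, u k = ∑ k ∈ posSupport u N, u k := (sum_posSupport hu).symm
    _ ≤ ∑ k ∈ posSupport u N, τ * ∑ j ∈ posSupport v k, τ * w := by
      refine sum_le_sum fun k hk => (hub k (mem_filter.1 hk).1).trans ?_
      rw [← sum_posSupport hv]
      exact mul_le_mul_of_nonneg_left (sum_le_sum (hw k hk)) hτ
    _ = τ ^ 2 * w * ∑ k ∈ posSupport u N, #(posSupport v k) := by
      simp only [sum_const, nsmul_eq_mul, Nat.cast_sum, mul_sum]
      exact sum_congr rfl fun k _ => by ring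

theorem sum_Ico_le_of_alternating (hτ : 0 ≤ τ)
    (hsmall : τ ^ 2 * ((N / 2 * ((N - 1) / 2) : ℕ) : ℝ) ^ 2 ≤ 1)
    (hu : ∀ k, 0 ≤ u k) (hv : ∀ k, 0 ≤ v k) (huv : ∀ k, min (u k) (v k) = 0)
    (hub : ∀ k ∈ Ico 1 N, u k ≤ τ * ∑ j ∈ Ico 1 k, v j)
    (hvb : ∀ k ∈ Ico 1 N, v k ≤ τ * (1 + ∑ i ∈ Ico 1 k, u i)) :
    ∑ k ∈ Ico 1 N, u k ≤ τ ^ 2 * ((N / 2 * ((N - 1) / 2) : ℕ) : ℝ) := by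
  set S := ∑ k ∈ Ico 1 N, u k
  set x : ℕ := #(posSupport u N) * #(posSupport v N)
  have hvN {k j : ℕ} (hk : k ∈ posSupport u N) (hj : j ∈ posSupport v k) : j ∈ Ico 1 N :=
    (mem_filter.1 (posSupport_mono (mem_Ico.1 (mem_filter.1 hk).1).2.le hj)).1
  have hxc : (x : ℝ) ≤ ((N / 2 * ((N - 1) / 2) : ℕ) : ℝ) := by
    exact_mod_cast card_mul_card_posSupport_le huv
  -- A pattern `u i > 0`, `v j > 0`, `u k > 0` with `i < j < k` is what lets `v j` grow beyond `τ`,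
  -- and it also removes the pair `(i, j)` from the count of pairs `j < k`.
  by_cases hpat : ∃ k ∈ posSupport u N, ∃ j ∈ posSupport v k, ∃ i ∈ Ico 1 j, 0 < u i
  · obtain ⟨k, hk, j, hj, i, hi, hui⟩ := hpat
    have hlt := sum_card_posSupport_lt hi hui hk hj
    have hSX := sum_Ico_le_mul_sum_card hτ hu hv hub (1 + S) fun k hk j hj => by
      refine (hvb j (hvN hk hj)).trans (mul_le_mul_of_nonneg_left ?_ hτ)
      gcongr
      exact sum_le_sum_of_subset_of_nonneg (Ico_subset_Ico_right (mem_Ico.1 (hvN hk hj)).2.le)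
        fun i _ _ => hu i
    refine (le_mul_of_le_mul_sub_one_mul_one_add (sum_nonneg fun k _ => hu k) (sq_nonneg τ)
      ?_ ?_ ?_).trans (mul_le_mul_of_nonneg_left hxc (sq_nonneg τ))
    · exact_mod_cast (Nat.zero_le _).trans_lt hlt
    · exact (mul_le_mul_of_nonneg_left (pow_le_pow_left₀ (Nat.cast_nonneg _) hxc 2)
        (sq_nonneg τ)).trans hsmall
    · refine hSX.trans (le_of_eq_of_le (mul_right_comm _ _ _) ?_)
      refine mul_le_mul_of_nonneg_right (mul_le_mul_of_nonneg_left ?_ (sq_nonneg τ))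
        (add_nonneg zero_le_one (sum_nonneg fun k _ => hu k))
      rw [le_sub_iff_add_le]
      exact_mod_cast hlt
  · push Not at hpat
    have hSX := sum_Ico_le_mul_sum_card hτ hu hv hub 1 fun k hk j hj => by
      have hW : ∑ i ∈ Ico 1 j, u i = 0 :=
        sum_eq_zero fun i hi => le_antisymm (hpat k hk j hj i hi) (hu i)
      simpa [hW] using hvb j (hvN hk hj)
    refine hSX.trans ?_
    rw [mul_one]
    gcongr
    exact sum_card_posSupport_le.trans (card_mul_card_posSupport_le huv)

end Alternating

theorem sum_mul_le_mul_sum_posPart {ι : Type*} {s : Finset ι} {b y : ι → ℝ} {τ : ℝ}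
    (hb : ∀ k ∈ s, b k ∈ Set.Icc 0 τ) : ∑ k ∈ s, b k * y k ≤ τ * ∑ k ∈ s, (y k)⁺ := by
  rw [mul_sum]
  refine sum_le_sum fun k hk => ?_
  calc b k * y k ≤ b k * (y k)⁺ := mul_le_mul_of_nonneg_left (le_posPart _) (hb k hk).1
    _ ≤ τ * (y k)⁺ := mul_le_mul_of_nonneg_right (hb k hk).2 (posPart_nonneg _)

section Recursion

variable {τ : ℝ} {g b : ℕ → ℝ} {m : ℕ}

theorem neg_le_of_eq_neg_sum (hb : ∀ k ≤ m, b k ∈ Set.Icc 0 τ) (hg0 : g 0 = 1)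
    (hg : g (m + 1) = -∑ k ∈ range (m + 1), b k * g k) :
    -g (m + 1) ≤ τ * (1 + ∑ k ∈ Ico 1 (m + 1), (g k)⁺) := by
  rw [hg, neg_neg]
  refine (sum_mul_le_mul_sum_posPart fun k hk => hb k (by simp at hk; omega)).trans_eq ?_
  rw [sum_range_eq_add_Ico _ (Nat.succ_pos m), hg0, posPart_eq_self.2 zero_le_one]

theorem le_of_eq_neg_sum (hb : ∀ k ≤ m, b k ∈ Set.Icc 0 τ) (hg0 : g 0 = 1)
    (hg : g (m + 1) = -∑ k ∈ range (m + 1), b k * g k) :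
    g (m + 1) ≤ τ * ∑ k ∈ Ico 1 (m + 1), (g k)⁻ := by
  rw [hg, ← sum_neg_distrib]
  simp_rw [← mul_neg]
  refine (sum_mul_le_mul_sum_posPart fun k hk => hb k (by simp at hk; omega)).trans_eq ?_
  simp_rw [posPart_neg]
  rw [sum_range_eq_add_Ico _ (Nat.succ_pos m), hg0, negPart_eq_zero.2 zero_le_one, zero_add]

end Recursion

theorem smallness_of_mul_sq_lt_one {N : ℕ} {τ : ℝ} (hN : 2 ≤ N) (hτ : 0 ≤ τ)
    (hτN : 4 / 5 * (N : ℝ) ^ 2 * τ < 1) :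
    τ ^ 2 * ((N / 2 * ((N - 1) / 2) : ℕ) : ℝ) ^ 2 ≤ 1 ∧
      (N - 1 : ℝ) * τ * (1 + τ ^ 2 * ((N / 2 * ((N - 1) / 2) : ℕ) : ℝ)) ≤ 1 := by
  have hN' : (2 : ℝ) ≤ N := by exact_mod_cast hN
  have hc : ((N / 2 * ((N - 1) / 2) : ℕ) : ℝ) ≤ (N : ℝ) ^ 2 / 4 := by
    have h1 : ((N / 2 : ℕ) : ℝ) ≤ N / 2 := Nat.cast_div_le
    have h2 : (((N - 1) / 2 : ℕ) : ℝ) ≤ ((N - 1 : ℕ) : ℝ) / 2 := Nat.cast_div_le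
    have h3 : ((N - 1 : ℕ) : ℝ) ≤ N := by exact_mod_cast Nat.sub_le N 1
    push_cast
    nlinarith [Nat.cast_nonneg (α := ℝ) (N / 2), Nat.cast_nonneg (α := ℝ) ((N - 1) / 2)]
  set c := ((N / 2 * ((N - 1) / 2) : ℕ) : ℝ)
  have hc0 : 0 ≤ c := Nat.cast_nonneg _
  have hNτ : N * τ ≤ 5 / 8 := by nlinarith
  have hτ' : τ ≤ 5 / 16 := by nlinarith
  have hτc : τ ^ 2 * c ≤ 25 / 256 := by
    calc τ ^ 2 * c ≤ τ ^ 2 * (N ^ 2 / 4) := by gcongr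
      _ = τ * (N ^ 2 * τ) / 4 := by ring
      _ ≤ 5 / 16 * (5 / 4) / 4 := by gcongr; linarith
      _ = 25 / 256 := by norm_num
  constructor
  · calc τ ^ 2 * c ^ 2 ≤ τ ^ 2 * (N ^ 2 / 4) ^ 2 := by gcongr
      _ = (N ^ 2 * τ) ^ 2 / 16 := by ring
      _ ≤ (5 / 4) ^ 2 / 16 := by gcongr; nlinarith
      _ ≤ 1 := by norm_num
  · calc (N - 1 : ℝ) * τ * (1 + τ ^ 2 * c) ≤ N * τ * (1 + 25 / 256) := by gcongr; linarith
      _ ≤ 5 / 8 * (1 + 25 / 256) := by gcongr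
      _ ≤ 1 := by norm_num

theorem abs_le_of_eq_neg_sum {N : ℕ} {τ : ℝ} (hN : 2 ≤ N) (hτ : 0 ≤ τ)
    (hτN : 4 / 5 * (N : ℝ) ^ 2 * τ < 1) {b : ℕ → ℕ → ℝ}
    (hb : ∀ m < N, ∀ k ≤ m, b k m ∈ Set.Icc 0 τ) {g : ℕ → ℝ} (hg0 : g 0 = 1)
    (hrec : ∀ m < N, g (m + 1) = -∑ k ∈ range (m + 1), b k m * g k) :
    |g N| ≤ τ + ((N / 2 * ((N - 1) / 2) : ℕ) : ℝ) * τ ^ 3 := by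
  obtain ⟨hsmall, hlast⟩ := smallness_of_mul_sq_lt_one hN hτ hτN
  have hneg (m : ℕ) (hm : m ∈ Ico 1 (N + 1)) : -g m ≤ τ * (1 + ∑ k ∈ Ico 1 m, (g k)⁺) := by
    obtain ⟨m, rfl⟩ : ∃ m', m = m' + 1 := ⟨m - 1, by simp at hm; omega⟩
    have hmN : m < N := by simp at hm; omega
    exact neg_le_of_eq_neg_sum (hb m hmN) hg0 (hrec m hmN)
  have hpos (m : ℕ) (hm : m ∈ Ico 1 (N + 1)) : g m ≤ τ * ∑ k ∈ Ico 1 m, (g k)⁻ := by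
    obtain ⟨m, rfl⟩ : ∃ m', m = m' + 1 := ⟨m - 1, by simp at hm; omega⟩
    have hmN : m < N := by simp at hm; omega
    exact le_of_eq_neg_sum (hb m hmN) hg0 (hrec m hmN)
  have hIco : Ico 1 N ⊆ Ico 1 (N + 1) := Ico_subset_Ico_right N.le_succ
  have hS := sum_Ico_le_of_alternating hτ hsmall (fun k => posPart_nonneg (g k))
    (fun k => negPart_nonneg (g k)) (fun k => posPart_inf_negPart_eq_zero (g k))
    (fun k hk => sup_le (hpos k (hIco hk)) (by positivity))
    (fun k hk => sup_le (hneg k (hIco hk)) (by positivity))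
  set c := ((N / 2 * ((N - 1) / 2) : ℕ) : ℝ)
  set S := ∑ k ∈ Ico 1 N, (g k)⁺
  have hvS (j : ℕ) (hj : j ∈ Ico 1 N) : (g j)⁻ ≤ τ * (1 + S) := by
    refine (sup_le (hneg j (hIco hj)) (by positivity)).trans ?_
    gcongr
    exact sum_le_sum_of_subset_of_nonneg (Ico_subset_Ico_right (mem_Ico.1 hj).2.le)
      fun k _ _ => posPart_nonneg _
  have hN1 : ((N - 1 : ℕ) : ℝ) = N - 1 := by rw [Nat.cast_sub (by omega), Nat.cast_one]
  have hN' : (1 : ℝ) ≤ N := by exact_mod_cast (by omega : 1 ≤ N)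
  rw [abs_le]
  constructor
  · nlinarith [hneg N (by simp; omega)]
  · calc g N ≤ τ * ∑ k ∈ Ico 1 N, (g k)⁻ := hpos N (by simp; omega)
      _ ≤ τ * ∑ k ∈ Ico 1 N, τ * (1 + S) := by gcongr with j hj; exact hvS j hj
      _ = τ * ((N - 1) * τ * (1 + S)) := by
        rw [sum_const, Nat.card_Ico, nsmul_eq_mul, hN1]; ring
      _ ≤ τ * ((N - 1) * τ * (1 + τ ^ 2 * c)) := by gcongr
      _ ≤ τ * 1 := by gcongr
      _ ≤ τ + c * τ ^ 3 := by rw [mul_one]; linarith [show 0 ≤ c * τ ^ 3 by positivity]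

def extremalSupport (N j : ℕ) : Finset ℕ :=
  if j + 1 < N then if j < (N - 1) / 2 then {0} else Icc 1 ((N - 1) / 2)
  else insert 0 (Ico ((N - 1) / 2 + 1) N)

noncomputable def extremalEntry (N : ℕ) (s t : ℝ) (i j : ℕ) : ℝ :=
  if i = j + 1 then s else if i ∈ extremalSupport N j then t else 0

section Extremal

variable {N : ℕ} {s t : ℝ}

theorem extremalSupport_subset (j : ℕ) : extremalSupport N j ⊆ range (j + 1) := by
  intro i hi
  simp only [extremalSupport] at hi
  split_ifs at hi <;> simp at hi ⊢ <;> omega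

theorem sum_extremalEntry_mul (m : ℕ) (f : ℕ → ℝ) :
    ∑ k ∈ range (m + 1), extremalEntry N s t k m * f k = t * ∑ k ∈ extremalSupport N m, f k := by
  rw [mul_sum, ← inter_eq_right.2 (extremalSupport_subset m), ← sum_ite_mem]
  refine sum_congr rfl fun k hk => ?_
  rw [extremalEntry, if_neg (by simp at hk; omega)]
  split_ifs <;> simp

theorem extremalEntry_of_lt {i j : ℕ} (hij : j + 1 < i) : extremalEntry N s t i j = 0 := by
  have hi : i ∉ extremalSupport N j := fun hi => by
    have := extremalSupport_subset j hi
    simp at this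
    omega
  simp [extremalEntry, hi, hij.ne']

theorem extremalSeq_succ (hs : s ≠ 0) (m : ℕ) :
    hessenbergSeq (fun k j => extremalEntry N s t k j / s) (m + 1)
      = -(t / s) * ∑ k ∈ extremalSupport N m,
          hessenbergSeq (fun k j => extremalEntry N s t k j / s) k := by
  rw [hessenbergSeq_succ]
  simp_rw [div_mul_eq_mul_div, ← sum_div, sum_extremalEntry_mul m]
  field_simp

theorem extremalSeq_of_le {k : ℕ} (hs : s ≠ 0) (hk1 : 1 ≤ k) (hk : k ≤ (N - 1) / 2) :
    hessenbergSeq (fun k j => extremalEntry N s t k j / s) k = -(t / s) := by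
  obtain ⟨m, rfl⟩ : ∃ m, k = m + 1 := ⟨k - 1, by omega⟩
  rw [extremalSeq_succ hs, extremalSupport, if_pos (by omega), if_pos (by omega),
    sum_singleton, hessenbergSeq_zero, mul_one]

theorem extremalSeq_of_lt {k : ℕ} (hs : s ≠ 0) (hk1 : (N - 1) / 2 < k) (hk : k < N) :
    hessenbergSeq (fun k j => extremalEntry N s t k j / s) k = ((N - 1) / 2 : ℕ) * (t / s) ^ 2 := by
  obtain ⟨m, rfl⟩ : ∃ m, k = m + 1 := ⟨k - 1, by omega⟩
  rw [extremalSeq_succ hs, extremalSupport, if_pos hk, if_neg (by omega),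
    sum_congr rfl fun i hi => extremalSeq_of_le hs (mem_Icc.1 hi).1 (mem_Icc.1 hi).2]
  simp only [sum_const, Nat.card_Icc, Nat.add_sub_cancel, nsmul_eq_mul]
  ring

theorem extremalSeq_last (hs : s ≠ 0) (hN : 1 ≤ N) :
    hessenbergSeq (fun k j => extremalEntry N s t k j / s) N
      = -(t / s + ((N / 2 * ((N - 1) / 2) : ℕ) : ℝ) * (t / s) ^ 3) := by
  obtain ⟨n, rfl⟩ : ∃ n, N = n + 1 := ⟨N - 1, by omega⟩
  rw [extremalSeq_succ hs n, extremalSupport, if_neg (by omega),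
    sum_insert (by simp), hessenbergSeq_zero,
    sum_congr rfl fun i hi => extremalSeq_of_lt hs (by simp at hi; omega) (mem_Ico.1 hi).2]
  simp only [sum_const, Nat.card_Ico, nsmul_eq_mul, Nat.cast_mul]
  rw [show n + 1 - ((n + 1 - 1) / 2 + 1) = (n + 1) / 2 by omega]
  ring

theorem isUpperHessenbergIcc_extremal (ht : 0 ≤ t) :
    IsUpperHessenbergIcc s t (of fun i j : Fin N => extremalEntry N s t i j) := by
  refine ⟨fun i j hij => by simp [extremalEntry, hij], fun i j hij => ?_, fun i j hij => ?_⟩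
  · exact extremalEntry_of_lt hij
  · simp only [of_apply, extremalEntry, if_neg (show (i : ℕ) ≠ j + 1 by omega)]
    split_ifs <;> simp [ht]

theorem abs_det_extremal (hs : 0 < s) (ht : 0 ≤ t) (hN : 1 ≤ N) :
    |(of fun i j : Fin N => extremalEntry N s t i j).det|
      = s ^ N * (t / s + ((N / 2 * ((N - 1) / 2) : ℕ) : ℝ) * (t / s) ^ 3) := by
  obtain ⟨n, rfl⟩ : ∃ n, N = n + 1 := ⟨N - 1, by omega⟩
  rw [det_hessenberg_eq_hessenbergSeq hs.ne' _ (fun j _ => by simp [extremalEntry])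
    fun _ _ _ hij => extremalEntry_of_lt hij, extremalSeq_last hs.ne' hN, abs_mul, abs_neg,
    abs_pow, abs_neg, abs_of_pos hs, abs_of_nonneg (by positivity)]

end Extremal

namespace IsUpperHessenbergIcc

open Fin.NatCast in
theorem abs_det_le {N : ℕ} {s t : ℝ} {A : Matrix (Fin N) (Fin N) ℝ}
    (hA : IsUpperHessenbergIcc s t A) (hN : 2 ≤ N) (ht : 0 ≤ t) (hs : 4 / 5 * (N : ℝ) ^ 2 * t < s) :
    |A.det| ≤ s ^ N * (t / s + ((N / 2 * ((N - 1) / 2) : ℕ) : ℝ) * (t / s) ^ 3) := by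
  obtain ⟨n, rfl⟩ : ∃ n, N = n + 1 := ⟨N - 1, by omega⟩
  have hs0 : 0 < s := lt_of_le_of_lt (by positivity) hs
  obtain ⟨hsub, hzero, hIcc⟩ := hA
  set a : ℕ → ℕ → ℝ := fun i j => A (i : Fin (n + 1)) (j : Fin (n + 1))
  have hval {i : ℕ} (hi : i ≤ n) : ((i : Fin (n + 1)) : ℕ) = i := Fin.val_cast_of_lt (by omega)
  have hAa : A = of fun i j : Fin (n + 1) => a i j := by ext i j; simp [a]
  rw [hAa, det_hessenberg_eq_hessenbergSeq hs0.ne' a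
    (fun j hj => hsub _ _ (by rw [hval hj, hval hj.le]))
    (fun i hi j hij => hzero _ _ (by rw [hval hi, hval (by omega)]; exact hij)),
    abs_mul, abs_pow, abs_neg, abs_of_pos hs0]
  gcongr
  refine abs_le_of_eq_neg_sum hN (by positivity) ?_ (fun m hm k hk => ?_) (hessenbergSeq_zero _)
    fun m _ => hessenbergSeq_succ _ m
  · rwa [← mul_div_assoc, div_lt_one hs0]
  · have := hIcc k m (by rw [hval (by omega), hval (by omega)]; exact hk)
    exact ⟨div_nonneg this.1 hs0.le, div_le_div_of_nonneg_right this.2 hs0.le⟩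

end IsUpperHessenbergIcc

theorem pow_mul_div_add_eq {N : ℕ} {s t : ℝ} (hs : s ≠ 0) (hN : 2 ≤ N) :
    s ^ N * (t / s + ((N / 2 : ℕ) : ℝ) * (((N - 1) / 2 : ℕ) : ℝ) * (t / s) ^ 3)
      = s ^ (N - 1) * t + ((N / 2 : ℕ) : ℝ) * (((N - 1) / 2 : ℕ) : ℝ) * s ^ (N - 3) * t ^ 3 := by
  obtain rfl | hN3 := hN.eq_or_lt
  · norm_num
    field_simp
  · obtain ⟨M, rfl⟩ : ∃ M, N = M + 3 := ⟨N - 3, by omega⟩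
    simp only [show M + 3 - 1 = M + 2 by omega, Nat.add_sub_cancel]
    field_simp
    ring

theorem max_abs_det_case_III (n : ℕ) (hn : 2 ≤ n) (s t : ℝ) (ht : 0 < t)
    (hs : s > 4 / 5 * (n : ℝ) ^ 2 * t) :
    IsGreatest {x : ℝ | ∃ A : Matrix (Fin n) (Fin n) ℝ,
        IsUpperHessenbergIcc s t A ∧ x = |A.det|}
      (s ^ (n - 1) * t +
        ((n / 2 : ℕ) : ℝ) * (((n - 1) / 2 : ℕ) : ℝ) * s ^ (n - 3) * t ^ 3) := by
  have hs0 : 0 < s := lt_of_le_of_lt (by positivity) hs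
  rw [← pow_mul_div_add_eq hs0.ne' hn, ← Nat.cast_mul]
  refine ⟨⟨_, isUpperHessenbergIcc_extremal ht.le,
    (abs_det_extremal hs0 ht.le (by omega)).symm⟩, ?_⟩
  rintro _ ⟨A, hA, rfl⟩
  exact hA.abs_det_le hn ht.le hs
end
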